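/- The group G₂ is torsion-free: every element of G₂ other than the identity has infinite order (equivalently, for every g ≠ 1 in G₂ and every integer n ≥ 1, gⁿ ≠ 1). -/

import Mathlib

/-!
Sending `γ` to `1` maps `G₂` onto the Klein bottle group `⟨α, β ∣ αβα⁻¹ = β⁻¹⟩ ≅ ℤ ⋊ ℤ`, whose
kernel is free on the conjugates `γᵢ = αⁱγα⁻ⁱ`, `i ∈ ℤ`: `α` shifts them, and `β` inverts each of
them because `β` inverts `γ` and `αβα⁻¹ = β⁻¹`. Hence `G₂ ≅ F(ℤ) ⋊ (ℤ ⋊ ℤ)`, and a semidirect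
product of torsion-free groups is torsion-free. Only the embedding is needed: `α ↦ α`, `β ↦ β`,
`γ ↦ γ₀` has the left inverse `γᵢ ↦ αⁱγα⁻ⁱ`.
-/

/-- The group `G₂ = ⟨α, β, γ ∣ αβα⁻¹ = β⁻¹, βγβ⁻¹ = γ⁻¹⟩`, as the presented
group on three generators with relators `αβα⁻¹β` and `βγβ⁻¹γ`. -/
abbrev G₂ : Type :=
  PresentedGroup ({FreeGroup.of 0 * FreeGroup.of 1 * (FreeGroup.of 0)⁻¹ * FreeGroup.of 1,
    FreeGroup.of 1 * FreeGroup.of 2 * (FreeGroup.of 1)⁻¹ * FreeGroup.of 2} :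
    Set (FreeGroup (Fin 3)))

/-- Weaker than `IsMulTorsionFree`, which also asks for unique roots and fails for `G₂`:
there `β² = (βγ)²`. -/
def Monoid.IsTorsionFree (G : Type*) [Monoid G] : Prop :=
  ∀ g : G, IsOfFinOrder g → g = 1

namespace Monoid.IsTorsionFree

variable {G H N : Type*} [Group G] [Group H] [Group N]

theorem of_isMulTorsionFree [IsMulTorsionFree G] : IsTorsionFree G :=
  fun _ hg => hg.eq_one'

theorem of_injective {f : G →* H} (hf : Function.Injective f) (hH : IsTorsionFree H) :
    IsTorsionFree G :=
  fun g hg => hf <| by rw [map_one]; exact hH _ (f.isOfFinOrder hg)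

theorem semidirectProduct {φ : G →* MulAut N} (hN : IsTorsionFree N) (hG : IsTorsionFree G) :
    IsTorsionFree (N ⋊[φ] G) := by
  intro x hx
  have hright : x.right = 1 := hG _ (SemidirectProduct.rightHom.isOfFinOrder hx)
  have hleft : SemidirectProduct.inl x.left = x := by ext <;> simp [hright]
  rw [← hleft, SemidirectProduct.inl_injective.isOfFinOrder_iff] at hx
  rw [← hleft, hN _ hx, map_one]

end Monoid.IsTorsionFree

namespace SemidirectProduct

variable {N G H : Type*} [Group N] [Group G] [Group H]

/-- The hypothesis of `SemidirectProduct.lift` cuts out a subgroup, so it only needs to be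
checked on generators. -/
def liftCompatible (φ : G →* MulAut N) (fn : N →* H) (fg : G →* H) : Subgroup G where
  carrier := {g | fn.comp (φ g).toMonoidHom = (MulAut.conj (fg g)).toMonoidHom.comp fn}
  one_mem' := by ext; simp
  mul_mem' {g g'} hg hg' := by
    ext n
    have hgg' := DFunLike.congr_fun hg (φ g' n)
    have hg'n := DFunLike.congr_fun hg' n
    simp only [MonoidHom.comp_apply, MulEquiv.coe_toMonoidHom, MulAut.conj_apply] at hgg' hg'n ⊢
    rw [map_mul, MulAut.mul_apply, hgg', hg'n, map_mul]
    group
  inv_mem' {g} hg := by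
    ext n
    have hgn := DFunLike.congr_fun hg ((φ g)⁻¹ n)
    simp only [MonoidHom.comp_apply, MulEquiv.coe_toMonoidHom, MulAut.conj_apply,
      MulAut.apply_inv_self] at hgn ⊢
    rw [map_inv, map_inv, hgn]
    group

variable {φ : G →* MulAut N} {fn : N →* H} {fg : G →* H}

theorem mem_liftCompatible {g : G} :
    g ∈ liftCompatible φ fn fg ↔ ∀ n, fn (φ g n) = fg g * fn n * (fg g)⁻¹ := by
  simp [liftCompatible, MonoidHom.ext_iff]

theorem mem_liftCompatible_freeGroup {ι : Type*} {φ : G →* MulAut (FreeGroup ι)}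
    {fn : FreeGroup ι →* H} {g : G} :
    g ∈ liftCompatible φ fn fg ↔
      ∀ i, fn (φ g (FreeGroup.of i)) = fg g * fn (FreeGroup.of i) * (fg g)⁻¹ := by
  refine ⟨fun h i => by simpa using DFunLike.congr_fun h (FreeGroup.of i), fun h => ?_⟩
  exact FreeGroup.ext_hom _ _ fun i => by simpa using h i

def liftOfCompatible (h : liftCompatible φ fn fg = ⊤) : N ⋊[φ] G →* H :=
  lift fn fg fun g => (h ▸ Subgroup.mem_top g : g ∈ liftCompatible φ fn fg)

@[simp]
theorem liftOfCompatible_inl (h : liftCompatible φ fn fg = ⊤) (n : N) :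
    liftOfCompatible h (inl n) = fn n :=
  lift_inl ..

@[simp]
theorem liftOfCompatible_inr (h : liftCompatible φ fn fg = ⊤) (g : G) :
    liftOfCompatible h (inr g) = fg g :=
  lift_inr ..

theorem eq_top_of_comap_inl_of_comap_inr {S : Subgroup (N ⋊[φ] G)} (hl : S.comap inl = ⊤)
    (hr : S.comap inr = ⊤) : S = ⊤ :=
  eq_top_iff.2 fun x _ => inl_left_mul_inr_right x ▸
    S.mul_mem (Subgroup.mem_comap.1 (hl ▸ Subgroup.mem_top x.left))
      (Subgroup.mem_comap.1 (hr ▸ Subgroup.mem_top x.right))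

end SemidirectProduct

theorem Int.subgroup_eq_top_of_ofAdd_one_mem {S : Subgroup (Multiplicative ℤ)}
    (h : Multiplicative.ofAdd 1 ∈ S) : S = ⊤ :=
  eq_top_iff.2 fun u _ => by simpa [← Int.ofAdd_mul] using S.zpow_mem h u.toAdd

section InvertingConjugates

variable {G : Type*} [Group G] {a b c : G}

theorem conj_conj_eq_inv_iff (hab : a * b * a⁻¹ = b⁻¹) :
    b * (a * c * a⁻¹) * b⁻¹ = (a * c * a⁻¹)⁻¹ ↔ b * c * b⁻¹ = c⁻¹ := by
  have hba : b * a = a * b⁻¹ := by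
    calc b * a = (a * b * a⁻¹)⁻¹ * a := by rw [hab, inv_inv]
      _ = a * b⁻¹ := by group
  have hlhs : b * (a * c * a⁻¹) * b⁻¹ = a * (b⁻¹ * c * b) * a⁻¹ := by
    calc b * (a * c * a⁻¹) * b⁻¹ = (b * a) * c * (b * a)⁻¹ := by group
      _ = _ := by rw [hba]; group
  rw [hlhs, show (a * c * a⁻¹)⁻¹ = a * c⁻¹ * a⁻¹ by group, mul_left_inj, mul_right_inj]
  constructor <;> intro h
  · calc b * c * b⁻¹ = (b * c⁻¹ * b⁻¹)⁻¹ := by group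
      _ = (b * (b⁻¹ * c * b) * b⁻¹)⁻¹ := by rw [h]
      _ = c⁻¹ := by group
  · calc b⁻¹ * c * b = (b⁻¹ * c⁻¹ * b)⁻¹ := by group
      _ = (b⁻¹ * (b * c * b⁻¹) * b)⁻¹ := by rw [h]
      _ = c⁻¹ := by group

theorem conj_zpow_conj_eq_inv (hab : a * b * a⁻¹ = b⁻¹) (hbc : b * c * b⁻¹ = c⁻¹) (i : ℤ) :
    b * (a ^ i * c * (a ^ i)⁻¹) * b⁻¹ = (a ^ i * c * (a ^ i)⁻¹)⁻¹ := by
  induction i using Int.induction_on with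
  | zero => simpa using hbc
  | succ i ih =>
    rwa [show a ^ ((i : ℤ) + 1) * c * (a ^ ((i : ℤ) + 1))⁻¹ =
        a * (a ^ (i : ℤ) * c * (a ^ (i : ℤ))⁻¹) * a⁻¹ by group,
      conj_conj_eq_inv_iff hab]
  | pred i ih =>
    rwa [← conj_conj_eq_inv_iff hab,
      show a * (a ^ (-(i : ℤ) - 1) * c * (a ^ (-(i : ℤ) - 1))⁻¹) * a⁻¹ =
        a ^ (-(i : ℤ)) * c * (a ^ (-(i : ℤ)))⁻¹ by group]

end InvertingConjugates

namespace FreeGroup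

variable {ι : Type*}

theorem mulAut_ext {e e' : MulAut (FreeGroup ι)} (h : ∀ i, e (of i) = e' (of i)) : e = e' :=
  MulEquiv.toMonoidHom_injective (ext_hom _ _ h)

def invGenerators : MulAut (FreeGroup ι) :=
  have h : (lift fun i => (of i)⁻¹ : FreeGroup ι →* FreeGroup ι).comp (lift fun i => (of i)⁻¹) =
      MonoidHom.id _ := ext_hom _ _ fun i => by simp
  MonoidHom.toMulEquiv _ _ h h

@[simp]
theorem invGenerators_of (i : ι) : invGenerators (of i) = (of i)⁻¹ := by
  simp [invGenerators]

theorem invGenerators_mul_self : invGenerators * invGenerators = (1 : MulAut (FreeGroup ι)) :=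
  mulAut_ext fun i => by simp

end FreeGroup

namespace G₂

open Multiplicative SemidirectProduct

/-- The Klein bottle group `⟨α, β ∣ αβα⁻¹ = β⁻¹⟩`: `β` generates the left factor, `α` the right
one. -/
abbrev KleinBottle : Type :=
  Multiplicative ℤ ⋊[zpowersHom _ (MulEquiv.inv (Multiplicative ℤ))] Multiplicative ℤ

theorem KleinBottle.subgroup_eq_top {S : Subgroup KleinBottle} (hα : inr (ofAdd 1) ∈ S)
    (hβ : inl (ofAdd 1) ∈ S) : S = ⊤ :=
  eq_top_of_comap_inl_of_comap_inr (Int.subgroup_eq_top_of_ofAdd_one_mem hβ)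
    (Int.subgroup_eq_top_of_ofAdd_one_mem hα)

def shift : MulAut (FreeGroup ℤ) := FreeGroup.freeGroupCongr (Equiv.addRight 1)

@[simp]
theorem shift_of (i : ℤ) : shift (FreeGroup.of i) = FreeGroup.of (i + 1) := rfl

theorem commute_shift_invGenerators : Commute shift FreeGroup.invGenerators :=
  FreeGroup.mulAut_ext fun i => by simp [MulAut.mul_apply]

/-- The action of `α` and `β` on the free group on the `γᵢ = αⁱγα⁻ⁱ`. -/
def kleinAction : KleinBottle →* MulAut (FreeGroup ℤ) :=
  liftOfCompatible (fn := zpowersHom _ FreeGroup.invGenerators) (fg := zpowersHom _ shift) <|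
    Int.subgroup_eq_top_of_ofAdd_one_mem <| mem_liftCompatible.2 fun u => by
      simp only [zpowersHom_apply, zpow_one, MulEquiv.inv_apply, toAdd_inv, zpow_neg,
        toAdd_ofAdd]
      rw [(commute_shift_invGenerators.zpow_right _).eq, mul_inv_cancel_right, ← inv_zpow,
        inv_eq_of_mul_eq_one_right FreeGroup.invGenerators_mul_self]

@[simp]
theorem kleinAction_inl (u : Multiplicative ℤ) :
    kleinAction (inl u) = FreeGroup.invGenerators ^ u.toAdd :=
  liftOfCompatible_inl ..

@[simp]
theorem kleinAction_inr (v : Multiplicative ℤ) : kleinAction (inr v) = shift ^ v.toAdd :=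
  liftOfCompatible_inr ..

abbrev FreeByKleinBottle : Type := FreeGroup ℤ ⋊[kleinAction] KleinBottle

theorem isTorsionFree_freeByKleinBottle : Monoid.IsTorsionFree FreeByKleinBottle :=
  .semidirectProduct .of_isMulTorsionFree
    (.semidirectProduct .of_isMulTorsionFree .of_isMulTorsionFree)

def α : G₂ := PresentedGroup.of 0
def β : G₂ := PresentedGroup.of 1
def γ : G₂ := PresentedGroup.of 2

theorem α_mul_β_mul_α_inv : α * β * α⁻¹ = β⁻¹ :=
  eq_inv_of_mul_eq_one_left (PresentedGroup.one_of_mem (Set.mem_insert _ _))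

theorem β_mul_γ_mul_β_inv : β * γ * β⁻¹ = γ⁻¹ :=
  eq_inv_of_mul_eq_one_left (PresentedGroup.one_of_mem (Set.mem_insert_of_mem _ rfl))

def toFreeByKleinBottle : G₂ →* FreeByKleinBottle :=
  PresentedGroup.toGroup (f := ![inr (inr (ofAdd 1)), inr (inl (ofAdd 1)), inl (FreeGroup.of 0)])
    (by
      rintro r (rfl | rfl)
      · simp only [map_mul, map_inv, FreeGroup.lift_apply_of, Matrix.cons_val_zero,
          Matrix.cons_val_one]
        ext <;> simp
      · simp only [map_mul, map_inv, FreeGroup.lift_apply_of, Matrix.cons_val_one,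
          Matrix.cons_val]
        rw [← map_inv, ← inl_aut, ← map_mul]
        simp)

def fromKleinBottle : KleinBottle →* G₂ :=
  liftOfCompatible (fn := zpowersHom _ β) (fg := zpowersHom _ α) <|
    Int.subgroup_eq_top_of_ofAdd_one_mem <| mem_liftCompatible.2 fun u => by
      simp only [zpowersHom_apply, toAdd_ofAdd, zpow_one, MulEquiv.inv_apply, toAdd_inv,
        zpow_neg]
      rw [← conj_zpow, α_mul_β_mul_α_inv, inv_zpow]

@[simp]
theorem fromKleinBottle_inl (u : Multiplicative ℤ) : fromKleinBottle (inl u) = β ^ u.toAdd :=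
  liftOfCompatible_inl ..

@[simp]
theorem fromKleinBottle_inr (v : Multiplicative ℤ) : fromKleinBottle (inr v) = α ^ v.toAdd :=
  liftOfCompatible_inr ..

def fromFreeByKleinBottle : FreeByKleinBottle →* G₂ :=
  liftOfCompatible (fn := FreeGroup.lift fun i => α ^ i * γ * (α ^ i)⁻¹) (fg := fromKleinBottle) <|
    KleinBottle.subgroup_eq_top
      (mem_liftCompatible_freeGroup.2 fun i => by
        simp only [kleinAction_inr, fromKleinBottle_inr, toAdd_ofAdd, zpow_one, shift_of,
          FreeGroup.lift_apply_of]
        group)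
      (mem_liftCompatible_freeGroup.2 fun i => by
        simp only [kleinAction_inl, fromKleinBottle_inl, toAdd_ofAdd, zpow_one,
          FreeGroup.invGenerators_of, map_inv, FreeGroup.lift_apply_of]
        exact (conj_zpow_conj_eq_inv α_mul_β_mul_α_inv β_mul_γ_mul_β_inv i).symm)

theorem fromFreeByKleinBottle_comp_toFreeByKleinBottle :
    fromFreeByKleinBottle.comp toFreeByKleinBottle = MonoidHom.id G₂ :=
  PresentedGroup.ext fun i => by
    fin_cases i <;> simp [fromFreeByKleinBottle, toFreeByKleinBottle, α, β, γ]

theorem isTorsionFree : Monoid.IsTorsionFree G₂ :=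
  .of_injective (f := toFreeByKleinBottle)
    (Function.LeftInverse.injective (g := fromFreeByKleinBottle)
      (DFunLike.congr_fun fromFreeByKleinBottle_comp_toFreeByKleinBottle))
    isTorsionFree_freeByKleinBottle

end G₂

/-- `G₂` is torsion-free: for every `g ≠ 1` and every `n ≥ 1`, `gⁿ ≠ 1`. -/
theorem G₂_torsion_free (g : G₂) (hg : g ≠ 1) (n : ℕ) (hn : 1 ≤ n) : g ^ n ≠ 1 :=
  fun h => hg (G₂.isTorsionFree g (isOfFinOrder_iff_pow_eq_one.2 ⟨n, hn, h⟩))
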